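/- Let u_T : ℝⁿ → ℝ be Lipschitz with I_T(u_T) nonempty. Then ũ0 := S_T^- u_T is the smallest element of I_T(u_T): S_T^+ ũ0 = u_T, and every u0 ∈ I_T(u_T) satisfies u0(x) ≥ ũ0(x) for all x ∈ ℝⁿ. -/

import Mathlib

open scoped RealInnerProductSpace
open Filter

noncomputable section

/-- `n`-dimensional Euclidean space. -/
abbrev Euc (n : ℕ) := EuclideanSpace ℝ (Fin n)

/-- A real-valued function on `ℝⁿ` is Lipschitz (with some constant). -/
def IsLip {n : ℕ} (f : Euc n → ℝ) : Prop := ∃ K : NNReal, LipschitzWith K f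

/-- The Legendre transform `L(q) = sup_p (⟨q,p⟫ - H(p))`. -/
def legendre {n : ℕ} (H : Euc n → ℝ) (q : Euc n) : ℝ :=
  ⨆ p : Euc n, (⟪q, p⟫ - H p)

/-- The forward Hopf–Lax operator `(S_T^+ g)(x) = inf_y [g(y) + T·L((x-y)/T)]`. -/
def Splus {n : ℕ} (T : ℝ) (L : Euc n → ℝ) (g : Euc n → ℝ) (x : Euc n) : ℝ :=
  ⨅ y : Euc n, (g y + T * L (T⁻¹ • (x - y)))

/-- The backward operator `(S_T^- g)(x) = sup_y [g(y) - T·L((y-x)/T)]`. -/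
def Sminus {n : ℕ} (T : ℝ) (L : Euc n → ℝ) (g : Euc n → ℝ) (x : Euc n) : ℝ :=
  ⨆ y : Euc n, (g y - T * L (T⁻¹ • (y - x)))

/-- The Hessian of `H` is positive definite at every point. -/
def PosDefHessian {n : ℕ} (H : Euc n → ℝ) : Prop :=
  ∀ p v : Euc n, v ≠ 0 → 0 < iteratedFDeriv ℝ 2 H p ![v, v]

/-- `H` is superlinear: `H(p)/‖p‖ → +∞` as `‖p‖ → +∞`. -/
def Superlinear {n : ℕ} (H : Euc n → ℝ) : Prop :=
  Tendsto (fun p : Euc n => H p / ‖p‖) (cocompact (Euc n)) atTop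

/-!
For Lipschitz data, superlinearity of `H` makes `L` grow faster than any linear function, so
all the infima and suprema involved are finite. Then `S⁻ v ≤ u ↔ v ≤ S⁺ u`, both sides saying
`v x ≤ u y + T L((x - y)/T)` for all `x, y`: this Galois connection gives `S⁻ u_T ≤ u₀` for every
`u₀ ∈ I_T(u_T)` and `u_T ≤ S⁺ S⁻ u_T`, while monotonicity of `S⁺` gives
`S⁺ S⁻ u_T ≤ S⁺ u₀ = u_T`.
-/

namespace Legendre

variable {n : ℕ} {H : Euc n → ℝ}

theorem tendsto_sub_inner_cocompact (hH : Superlinear H) (q : Euc n) :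
    Tendsto (fun p => H p - ⟪q, p⟫) (cocompact (Euc n)) atTop := by
  have hprod : Tendsto (fun p : Euc n => ‖p‖ * (H p / ‖p‖ - ‖q‖)) (cocompact (Euc n)) atTop :=
    tendsto_norm_cocompact_atTop.atTop_mul_atTop₀ (tendsto_atTop_add_const_right _ _ hH)
  refine tendsto_atTop_mono' _ ?_ hprod
  filter_upwards [tendsto_norm_cocompact_atTop.eventually_gt_atTop 0] with p hp
  calc ‖p‖ * (H p / ‖p‖ - ‖q‖) = H p - ‖q‖ * ‖p‖ := by field_simp
    _ ≤ H p - ⟪q, p⟫ := by linarith [real_inner_le_norm q p]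

theorem bddAbove_range_inner_sub (hHc : Continuous H) (hH : Superlinear H) (q : Euc n) :
    BddAbove (Set.range fun p => ⟪q, p⟫ - H p) := by
  obtain ⟨p₀, hp₀⟩ := (hHc.sub (continuous_const.inner continuous_id)).exists_forall_le
    (f := fun p => H p - ⟪q, p⟫) (tendsto_sub_inner_cocompact hH q)
  exact ⟨⟪q, p₀⟫ - H p₀, by rintro _ ⟨p, rfl⟩; linarith [hp₀ p]⟩

theorem inner_sub_le_legendre (hHc : Continuous H) (hH : Superlinear H) (q p : Euc n) :
    ⟪q, p⟫ - H p ≤ legendre H q :=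
  le_ciSup (bddAbove_range_inner_sub hHc hH q) p

/-- Testing the supremum at `p = (K / ‖q‖) • q` in the ball of radius `K`. -/
theorem exists_norm_mul_sub_le_legendre (hHc : Continuous H) (hH : Superlinear H) (K : NNReal) :
    ∃ M, ∀ q, K * ‖q‖ - M ≤ legendre H q := by
  obtain ⟨M, hM⟩ := ((isCompact_closedBall (0 : Euc n) K).image hHc).bddAbove
  refine ⟨M, fun q => ?_⟩
  set p : Euc n := (K / ‖q‖) • q
  have ⟨hp, hqp⟩ : ‖p‖ ≤ K ∧ ⟪q, p⟫ = K * ‖q‖ := by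
    rcases eq_or_ne ‖q‖ 0 with hq | hq
    · simp [p, hq]
    · rw [norm_smul, real_inner_smul_right, real_inner_self_eq_norm_sq,
        Real.norm_of_nonneg (by positivity)]
      exact ⟨(div_mul_cancel₀ _ hq).le, by field_simp⟩
  have hHp : H p ≤ M := hM ⟨p, by simpa using hp, rfl⟩
  linarith [inner_sub_le_legendre hHc hH q p]

end Legendre

namespace HopfLax

variable {n : ℕ} {T : ℝ} {L : Euc n → ℝ} {u v : Euc n → ℝ} {x y : Euc n}

theorem splus_le (hu : BddBelow (Set.range fun y => u y + T * L (T⁻¹ • (x - y)))) (y : Euc n) :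
    Splus T L u x ≤ u y + T * L (T⁻¹ • (x - y)) :=
  ciInf_le hu y

theorem le_sminus (hv : BddAbove (Set.range fun z => v z - T * L (T⁻¹ • (z - y)))) (z : Euc n) :
    v z - T * L (T⁻¹ • (z - y)) ≤ Sminus T L v y :=
  le_ciSup hv z

theorem le_splus_of_forall_le (h : ∀ x y, v x ≤ u y + T * L (T⁻¹ • (x - y))) :
    v ≤ Splus T L u :=
  fun x => le_ciInf (h x)

theorem sminus_le_of_forall_le (h : ∀ x y, v x ≤ u y + T * L (T⁻¹ • (x - y))) :
    Sminus T L v ≤ u :=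
  fun y => ciSup_le fun x => by linarith [h x y]

theorem sminus_le_of_le_splus (hu : ∀ x, BddBelow (Set.range fun y => u y + T * L (T⁻¹ • (x - y))))
    (h : v ≤ Splus T L u) : Sminus T L v ≤ u :=
  sminus_le_of_forall_le fun x y => (h x).trans (splus_le (hu x) y)

theorem le_splus_sminus (hv : ∀ y, BddAbove (Set.range fun z => v z - T * L (T⁻¹ • (z - y)))) :
    v ≤ Splus T L (Sminus T L v) :=
  le_splus_of_forall_le fun x y => by linarith [le_sminus (hv y) x]

theorem bddBelow_sminus_add (hv : ∀ y, BddAbove (Set.range fun z => v z - T * L (T⁻¹ • (z - y))))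
    (x : Euc n) : BddBelow (Set.range fun y => Sminus T L v y + T * L (T⁻¹ • (x - y))) :=
  ⟨v x, by rintro _ ⟨y, rfl⟩; linarith [le_sminus (hv y) x]⟩

theorem splus_mono (hu : ∀ x, BddBelow (Set.range fun y => u y + T * L (T⁻¹ • (x - y))))
    (h : u ≤ v) : Splus T L u ≤ Splus T L v :=
  fun x => ciInf_mono (hu x) fun y => by linarith [h y]

def HopfLaxBounded (T : ℝ) (L g : Euc n → ℝ) : Prop :=
  ∃ M, ∀ x y, g x - T * M ≤ g y + T * L (T⁻¹ • (x - y))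

theorem HopfLaxBounded.bddBelow (hu : HopfLaxBounded T L u) (x : Euc n) :
    BddBelow (Set.range fun y => u y + T * L (T⁻¹ • (x - y))) :=
  let ⟨M, hM⟩ := hu
  ⟨u x - T * M, by rintro _ ⟨y, rfl⟩; exact hM x y⟩

theorem HopfLaxBounded.bddAbove (hv : HopfLaxBounded T L v) (y : Euc n) :
    BddAbove (Set.range fun z => v z - T * L (T⁻¹ • (z - y))) :=
  let ⟨M, hM⟩ := hv
  ⟨v y + T * M, by rintro _ ⟨z, rfl⟩; linarith [hM z y]⟩

theorem hopfLaxBounded_of_lipschitzWith {K : NNReal} {g : Euc n → ℝ}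
    (hg : LipschitzWith K g) (hT : 0 < T) (hL : ∃ M, ∀ q, K * ‖q‖ - M ≤ L q) :
    HopfLaxBounded T L g := by
  obtain ⟨M, hM⟩ := hL
  refine ⟨M, fun x y => ?_⟩
  have hgxy : g x - g y ≤ K * ‖x - y‖ := (le_abs_self _).trans (hg.dist_le_mul x y)
  have hLxy : K * ‖x - y‖ - T * M ≤ T * L (T⁻¹ • (x - y)) :=
    calc K * ‖x - y‖ - T * M = T * (K * ‖T⁻¹ • (x - y)‖ - M) := by
          rw [norm_smul, Real.norm_of_nonneg (inv_nonneg.2 hT.le)]; field_simp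
      _ ≤ T * L (T⁻¹ • (x - y)) := mul_le_mul_of_nonneg_left (hM _) hT.le
  linarith

theorem hopfLaxBounded_legendre {H g : Euc n → ℝ} (hg : IsLip g) (hT : 0 < T)
    (hHc : Continuous H) (hH : Superlinear H) : HopfLaxBounded T (legendre H) g :=
  let ⟨K, hK⟩ := hg
  hopfLaxBounded_of_lipschitzWith hK hT (Legendre.exists_norm_mul_sub_le_legendre hHc hH K)

end HopfLax

open HopfLax

theorem backward_solution_smallest_initial_datum_general
    {n : ℕ} (T : ℝ) (hT : 0 < T)
    (H : Euc n → ℝ) (hH : ContDiff ℝ 2 H)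
    (hHsuper : Superlinear H)
    (uT : Euc n → ℝ) (huT : IsLip uT)
    (hreach : ∃ u0 : Euc n → ℝ, IsLip u0 ∧ Splus T (legendre H) u0 = uT) :
    Splus T (legendre H) (Sminus T (legendre H) uT) = uT ∧
      ∀ u0 : Euc n → ℝ, IsLip u0 → Splus T (legendre H) u0 = uT →
        ∀ x : Euc n, Sminus T (legendre H) uT x ≤ u0 x := by
  obtain ⟨u₀, hu₀, hu₀T⟩ := hreach
  have hmin (u : Euc n → ℝ) (hu : IsLip u) (huT' : Splus T (legendre H) u = uT) :
      Sminus T (legendre H) uT ≤ u :=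
    sminus_le_of_le_splus (hopfLaxBounded_legendre hu hT hH.continuous hHsuper).bddBelow huT'.ge
  have huT_bdd := (hopfLaxBounded_legendre huT hT hH.continuous hHsuper).bddAbove
  refine ⟨le_antisymm ?_ (le_splus_sminus huT_bdd), hmin⟩
  calc Splus T (legendre H) (Sminus T (legendre H) uT)
      ≤ Splus T (legendre H) u₀ := splus_mono (bddBelow_sminus_add huT_bdd) (hmin u₀ hu₀ hu₀T)
    _ = uT := hu₀T

/-- If `I_T(u_T)` is nonempty, then `ũ0 := S_T^- u_T` is its smallest
element: `S_T^+ ũ0 = u_T` and every `u0 ∈ I_T(u_T)` satisfies `u0 ≥ ũ0` pointwise. -/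
theorem backward_solution_smallest_initial_datum
    {n : ℕ} (hn : 0 < n) (T : ℝ) (hT : 0 < T)
    (H : Euc n → ℝ) (hH : ContDiff ℝ 2 H)
    (hHconv : PosDefHessian H) (hHsuper : Superlinear H)
    (uT : Euc n → ℝ) (huT : IsLip uT)
    (hreach : ∃ u0 : Euc n → ℝ, IsLip u0 ∧ Splus T (legendre H) u0 = uT) :
    Splus T (legendre H) (Sminus T (legendre H) uT) = uT ∧
      ∀ u0 : Euc n → ℝ, IsLip u0 → Splus T (legendre H) u0 = uT →
        ∀ x : Euc n, Sminus T (legendre H) uT x ≤ u0 x :=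
  backward_solution_smallest_initial_datum_general T hT H hH hHsuper uT huT hreach
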